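/- For every recursive space-filling curve map π on the grid D = {0,…,2^ω−1}² in the sense of Definition 2.3, the bijection σ : {0,…,4^ω−1} → D obtained by listing the points of D in increasing lexicographic order of their strings π(p) is a recursive space-filling curve ordering in the sense of Definition 2.1. -/

import Mathlib

/-- The axis-aligned square of grid points with corner `c` and side length `s`. -/
def square (c : ℕ × ℕ) (s : ℕ) : Set (ℕ × ℕ) :=
  {p | c.1 ≤ p.1 ∧ p.1 < c.1 + s ∧ c.2 ≤ p.2 ∧ p.2 < c.2 + s}

/-- The grid `D = {0,…,2^ω−1}²`. -/
def grid (ω : ℕ) : Set (ℕ × ℕ) := square (0, 0) (2 ^ ω)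

/-- A recursive space-filling curve ordering (Definition 2.1) of the grid
`D = {0,…,2^ω−1}²` with `m = 4^ω` points: a bijection `σ : {0,…,m−1} → D` such
that, if `ω ≥ 1`, there exist four pairwise disjoint equal-sized axis-aligned
subsquares `S₁, S₂, S₃, S₄` partitioning `D` with
`σ({j·m/4,…,(j+1)·m/4−1}) = S_{j+1} ∩ D` for `j = 0,1,2,3`, and the restriction of
`σ` to each `S_j`, reindexed and translated back to the origin, is itself a
recursive space-filling curve ordering. -/
def IsRSFCOrdering : ℕ → (ℕ → ℕ × ℕ) → Prop
  | 0, σ => Set.BijOn σ (Set.Iio (4 ^ 0)) (grid 0)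
  | ω + 1, σ =>
      Set.BijOn σ (Set.Iio (4 ^ (ω + 1))) (grid (ω + 1)) ∧
      ∃ (c : Fin 4 → ℕ × ℕ) (s : ℕ),
        (∀ j j' : Fin 4, j ≠ j' → Disjoint (square (c j) s) (square (c j') s)) ∧
        (⋃ j, square (c j) s) = grid (ω + 1) ∧
        (∀ j : Fin 4,
          σ '' Set.Ico (j.1 * 4 ^ ω) ((j.1 + 1) * 4 ^ ω) =
            square (c j) s ∩ grid (ω + 1)) ∧
        (∀ j : Fin 4, IsRSFCOrdering ω fun i =>
          ((σ (j.1 * 4 ^ ω + i)).1 - (c j).1, (σ (j.1 * 4 ^ ω + i)).2 - (c j).2))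

/-- `(a, b)` is the corner of a level-`k` dyadic cell of the grid `{0,…,2^ω−1}²`,
i.e. `a, b < 2^ω` are divisible by `2^k`. -/
def CellCorner (ω k a b : ℕ) : Prop :=
  a < 2 ^ ω ∧ b < 2 ^ ω ∧ 2 ^ k ∣ a ∧ 2 ^ k ∣ b

/-- The level-`k` dyadic cell `{a,…,a+2^k−1} × {b,…,b+2^k−1}` as a set of points. -/
def dyadicCell (k a b : ℕ) : Set (ℕ × ℕ) :=
  {p | a ≤ p.1 ∧ p.1 < a + 2 ^ k ∧ b ≤ p.2 ∧ p.2 < b + 2 ^ k}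

/-- A recursive space-filling curve map (Definition 2.3, `d = 2`) on the grid
`{0,…,2^ω−1}²`: `π ℓ (a, b)` is the bit string assigned to the depth-`ℓ` quadtree
cube (i.e. the level-`(ω−ℓ)` dyadic cell) with corner `(a, b)`; it must have length
`2ℓ`, distinct cubes of the same depth must receive distinct strings, and the string
of a cube must be a prefix of the string of each of its sub-cubes. -/
def IsRSFCMap (ω : ℕ) (π : ℕ → ℕ × ℕ → List Bool) : Prop :=
  (∀ ℓ, ℓ ≤ ω → ∀ a b, CellCorner ω (ω - ℓ) a b → (π ℓ (a, b)).length = 2 * ℓ) ∧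
  (∀ ℓ, ℓ ≤ ω → ∀ a b a' b',
    CellCorner ω (ω - ℓ) a b → CellCorner ω (ω - ℓ) a' b' →
    (a, b) ≠ (a', b') → π ℓ (a, b) ≠ π ℓ (a', b')) ∧
  (∀ ℓ ℓ', ℓ ≤ ℓ' → ℓ' ≤ ω → ∀ a b a' b',
    CellCorner ω (ω - ℓ) a b → CellCorner ω (ω - ℓ') a' b' →
    dyadicCell (ω - ℓ') a' b' ⊆ dyadicCell (ω - ℓ) a b →
    π ℓ (a, b) <+: π ℓ' (a', b'))

/-- For a grid point `p`, `π(p)` is the string of the unit cell containing `p`,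
whose corner is `p` itself, i.e. `π ω p`.  `SortsTo ω π σ` says that sorting the
points of the grid by the lexicographic order of their strings `π(p)` recovers the
ordering `σ`. -/
def SortsTo (ω : ℕ) (π : ℕ → ℕ × ℕ → List Bool) (σ : ℕ → ℕ × ℕ) : Prop :=
  ∀ i j : ℕ, i < j → j < 4 ^ ω → List.Lex (· < ·) (π ω (σ i)) (π ω (σ j))

/-!
Induction on `ω`. The four depth-1 cubes carry four distinct two-bit strings, and the string of
each cube is a prefix of the strings of all points in it. Hence sorting the points by their
strings lists the cubes one after the other, in the order of their two-bit strings, and since every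
cube has `4^ω` points the `j`-th block of `4^ω` indices fills exactly the cube of rank `j`. Inside
a cube, dropping the common prefix leaves a recursive space-filling curve map on the smaller grid,
for which the translated block of `σ` is again sorted, so the induction hypothesis applies.
-/

open Finset in
theorem eq_div_of_monotoneOn_of_card_fiber {K N : ℕ} {f : ℕ → ℕ}
    (hmono : MonotoneOn f (Set.Iio (K * N))) (hlt : ∀ i < K * N, f i < K)
    (hfiber : ∀ j < K, #{i ∈ range (K * N) | f i = j} = N) {i : ℕ} (hi : i < K * N) :
    f i = i / N := by
  have hcount : ∀ m ≤ K, #{i ∈ range (K * N) | f i < m} = m * N := by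
    intro m hm
    rw [card_eq_sum_card_fiberwise (f := f) (t := range m) fun i hi => by
      simp only [coe_filter, Set.mem_ofPred_eq, coe_range, Set.mem_Iio] at hi ⊢; exact hi.2]
    rw [sum_congr rfl fun j hj => ?_, sum_const, card_range, smul_eq_mul]
    simp only [mem_range] at hj
    have hfilter : {i ∈ range (K * N) | f i < m ∧ f i = j} = {i ∈ range (K * N) | f i = j} := by
      ext i
      simp only [mem_filter]
      exact ⟨fun h => ⟨h.1, h.2.2⟩, fun h => ⟨h.1, h.2 ▸ hj, h.2⟩⟩
    rw [filter_filter, hfilter, hfiber j (by omega)]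
  have hlt_iff : ∀ m ≤ K, f i < m ↔ i < m * N := by
    intro m hm
    constructor
    · intro h
      have hsub : range (i + 1) ⊆ {i' ∈ range (K * N) | f i' < m} := by
        intro i' hi'
        simp only [mem_range, mem_filter] at hi' ⊢
        exact ⟨by omega, (hmono (by simp only [Set.mem_Iio]; omega) hi (by omega)).trans_lt h⟩
      simpa [hcount m hm] using card_le_card hsub
    · intro h
      by_contra h'
      have hsub : {i' ∈ range (K * N) | f i' < m} ⊆ range i := by
        intro i' hi'
        simp only [mem_range, mem_filter] at hi' ⊢
        by_contra hle
        exact h' ((hmono hi hi'.1 (by omega)).trans_lt hi'.2)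
      have := card_le_card hsub
      rw [hcount m hm, card_range] at this
      omega
  refine (Nat.div_eq_of_lt_le ?_ ((hlt_iff _ (hlt i hi)).1 (Nat.lt_succ_self _))).symm
  by_contra h
  exact lt_irrefl _ ((hlt_iff _ (hlt i hi).le).2 (by omega))

def binVal : List Bool → ℕ
  | [] => 0
  | b :: l => b.toNat * 2 ^ l.length + binVal l

theorem binVal_lt_two_pow : ∀ l : List Bool, binVal l < 2 ^ l.length
  | [] => by simp [binVal]
  | b :: l => by
    have := binVal_lt_two_pow l
    cases b <;> simp only [binVal, Bool.toNat_false, Bool.toNat_true, List.length_cons, pow_succ] <;>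
      omega

theorem lex_iff_binVal_lt :
    ∀ {u v : List Bool}, u.length = v.length → (List.Lex (· < ·) u v ↔ binVal u < binVal v)
  | [], [], _ => by simp [binVal]
  | a :: u, b :: v, h => by
    have hlen : u.length = v.length := by simpa using h
    have hu := binVal_lt_two_pow u
    have hv := binVal_lt_two_pow v
    rw [hlen] at hu
    rw [List.cons_lex_cons_iff, lex_iff_binVal_lt hlen]
    simp only [binVal, hlen]
    cases a <;> cases b <;> simp +decide <;> omega

theorem binVal_injective_of_length_eq :
    ∀ {u v : List Bool}, u.length = v.length → binVal u = binVal v → u = v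
  | [], [], _, _ => rfl
  | a :: u, b :: v, h, hval => by
    have hlen : u.length = v.length := by simpa using h
    have hu := binVal_lt_two_pow u
    have hv := binVal_lt_two_pow v
    rw [hlen] at hu
    simp only [binVal, hlen] at hval
    have hab : a = b := by cases a <;> cases b <;> simp at hval ⊢ <;> omega
    subst hab
    rw [binVal_injective_of_length_eq hlen (by omega)]

theorem List.lex_append_left_iff {α : Type*} {r : α → α → Prop} [Std.Irrefl r] (s : List α)
    {t₁ t₂ : List α} : List.Lex r (s ++ t₁) (s ++ t₂) ↔ List.Lex r t₁ t₂ := by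
  induction s with
  | nil => rfl
  | cons a s ih => rw [List.cons_append, List.cons_append, List.lex_cons_iff, ih]

theorem List.Lex.append_of_length_eq {α : Type*} {r : α → α → Prop} {u v : List α}
    (h : List.Lex r u v) (hlen : u.length = v.length) (x y : List α) :
    List.Lex r (u ++ x) (v ++ y) := by
  induction h with
  | nil => simp at hlen
  | cons _ ih => exact .cons (ih (by simpa using hlen))
  | rel hab => exact .rel hab

theorem Set.BijOn.ncard_inter_preimage {α β : Type*} {f : α → β} {s : Set α} {t : Set β}
    (h : Set.BijOn f s t) (u : Set β) : (s ∩ f ⁻¹' u).ncard = (t ∩ u).ncard := by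
  rw [← h.image_eq, ← Set.image_inter_preimage, (h.injOn.mono Set.inter_subset_left).ncard_image]

theorem Ico_subset_Iio_pow_succ {ω j : ℕ} (hj : j < 4) :
    Set.Ico (j * 4 ^ ω) ((j + 1) * 4 ^ ω) ⊆ Set.Iio (4 ^ (ω + 1)) := fun _ hi =>
  hi.2.trans_le (pow_succ' 4 ω ▸ Nat.mul_le_mul_right _ hj)

theorem add_mem_Ico_iff {i j N : ℕ} : j * N + i ∈ Set.Ico (j * N) ((j + 1) * N) ↔ i < N := by
  rw [Set.mem_Ico, add_one_mul]
  omega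

theorem mem_square {c p : ℕ × ℕ} {s : ℕ} :
    p ∈ square c s ↔ c.1 ≤ p.1 ∧ p.1 < c.1 + s ∧ c.2 ≤ p.2 ∧ p.2 < c.2 + s := Iff.rfl

theorem mem_grid {ω : ℕ} {p : ℕ × ℕ} : p ∈ grid ω ↔ p.1 < 2 ^ ω ∧ p.2 < 2 ^ ω := by
  simp [grid, square]

theorem mem_dyadicCell {k a b : ℕ} {p : ℕ × ℕ} :
    p ∈ dyadicCell k a b ↔ a ≤ p.1 ∧ p.1 < a + 2 ^ k ∧ b ≤ p.2 ∧ p.2 < b + 2 ^ k := Iff.rfl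

theorem ncard_square (c : ℕ × ℕ) (s : ℕ) : (square c s).ncard = s * s := by
  have : square c s = Set.Ico c.1 (c.1 + s) ×ˢ Set.Ico c.2 (c.2 + s) := by
    ext p
    simp [square, and_assoc]
  rw [this, Set.ncard_prod, Set.ncard_Ico_nat, Set.ncard_Ico_nat, Nat.add_sub_cancel_left,
    Nat.add_sub_cancel_left]

theorem add_le_of_dvd_of_lt {d a n : ℕ} (ha : d ∣ a) (hn : d ∣ n) (h : a < n) : a + d ≤ n := by
  have := Nat.le_of_dvd (Nat.sub_pos_of_lt h) (Nat.dvd_sub hn ha)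
  omega

theorem dyadicCell_add_subset_add {k k' a b a' b' x y : ℕ}
    (h : dyadicCell k' a' b' ⊆ dyadicCell k a b) :
    dyadicCell k' (a' + x) (b' + y) ⊆ dyadicCell k (a + x) (b + y) := by
  intro q hq
  rw [mem_dyadicCell] at hq
  have := @h (q.1 - x, q.2 - y) (by rw [mem_dyadicCell]; omega)
  rw [mem_dyadicCell] at this ⊢
  omega

def quadrant (ω : ℕ) (p : ℕ × ℕ) : ℕ := p.1 / 2 ^ ω + 2 * (p.2 / 2 ^ ω)

def quadrantCorner (ω k : ℕ) : ℕ × ℕ := (2 ^ ω * (k % 2), 2 ^ ω * (k / 2))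

theorem le_and_lt_add_iff_div_eq {s a x : ℕ} (hs : 0 < s) :
    s * a ≤ x ∧ x < s * a + s ↔ x / s = a := by
  rw [Nat.div_eq_iff hs, mul_comm a]
  omega

theorem mem_square_quadrantCorner_iff {ω k : ℕ} (hk : k < 4) {p : ℕ × ℕ} :
    p ∈ square (quadrantCorner ω k) (2 ^ ω) ↔ p ∈ grid (ω + 1) ∧ quadrant ω p = k := by
  have hs : 0 < 2 ^ ω := by positivity
  have hx := le_and_lt_add_iff_div_eq (x := p.1) (a := k % 2) hs
  have hy := le_and_lt_add_iff_div_eq (x := p.2) (a := k / 2) hs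
  have hx2 : p.1 < 2 ^ (ω + 1) ↔ p.1 / 2 ^ ω < 2 := by rw [pow_succ', Nat.div_lt_iff_lt_mul hs]
  have hy2 : p.2 < 2 ^ (ω + 1) ↔ p.2 / 2 ^ ω < 2 := by rw [pow_succ', Nat.div_lt_iff_lt_mul hs]
  rw [mem_square, mem_grid, hx2, hy2, quadrant, quadrantCorner]
  dsimp only
  rw [← and_assoc, hx, hy]
  generalize p.1 / 2 ^ ω = x, p.2 / 2 ^ ω = y
  omega

theorem quadrant_lt_four {ω : ℕ} {p : ℕ × ℕ} (hp : p ∈ grid (ω + 1)) : quadrant ω p < 4 := by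
  have hs : 0 < 2 ^ ω := by positivity
  rw [mem_grid, pow_succ', ← Nat.div_lt_iff_lt_mul hs, ← Nat.div_lt_iff_lt_mul hs] at hp
  rw [quadrant]
  omega

theorem mem_square_quadrantCorner_quadrant {ω : ℕ} {p : ℕ × ℕ} (hp : p ∈ grid (ω + 1)) :
    p ∈ square (quadrantCorner ω (quadrant ω p)) (2 ^ ω) :=
  (mem_square_quadrantCorner_iff (quadrant_lt_four hp)).2 ⟨hp, rfl⟩

theorem square_quadrantCorner_subset_grid {ω k : ℕ} (hk : k < 4) :
    square (quadrantCorner ω k) (2 ^ ω) ⊆ grid (ω + 1) :=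
  fun _ hp => ((mem_square_quadrantCorner_iff hk).1 hp).1

theorem disjoint_square_quadrantCorner {ω k k' : ℕ} (hk : k < 4) (hk' : k' < 4) (h : k ≠ k') :
    Disjoint (square (quadrantCorner ω k) (2 ^ ω)) (square (quadrantCorner ω k') (2 ^ ω)) := by
  rw [Set.disjoint_left]
  intro p hp hp'
  exact h (((mem_square_quadrantCorner_iff hk).1 hp).2.symm.trans
    ((mem_square_quadrantCorner_iff hk').1 hp').2)

theorem iUnion_square_quadrantCorner (ω : ℕ) :
    ⋃ k : Fin 4, square (quadrantCorner ω k) (2 ^ ω) = grid (ω + 1) := by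
  refine subset_antisymm (Set.iUnion_subset fun k => square_quadrantCorner_subset_grid k.2)
    fun p hp => Set.mem_iUnion.2 ⟨⟨_, quadrant_lt_four hp⟩, mem_square_quadrantCorner_quadrant hp⟩

theorem quadrantCorner_mem_square (ω k : ℕ) :
    quadrantCorner ω k ∈ square (quadrantCorner ω k) (2 ^ ω) := by
  have : 0 < 2 ^ ω := by positivity
  rw [mem_square]
  omega

theorem quadrant_quadrantCorner {ω k : ℕ} (hk : k < 4) : quadrant ω (quadrantCorner ω k) = k :=
  ((mem_square_quadrantCorner_iff hk).1 (quadrantCorner_mem_square ω k)).2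

theorem cellCorner_quadrantCorner {ω k : ℕ} (hk : k < 4) :
    CellCorner (ω + 1) ω (quadrantCorner ω k).1 (quadrantCorner ω k).2 := by
  have hc := mem_grid.1 (square_quadrantCorner_subset_grid hk (quadrantCorner_mem_square ω k))
  exact ⟨hc.1, hc.2, Dvd.intro _ rfl, Dvd.intro _ rfl⟩

theorem cellCorner_add {ω j a b : ℕ} {c : ℕ × ℕ} (hc : CellCorner (ω + 1) ω c.1 c.2)
    (hj : j ≤ ω) (h : CellCorner ω j a b) : CellCorner (ω + 1) j (a + c.1) (b + c.2) := by
  obtain ⟨ha, hb, hja, hjb⟩ := h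
  obtain ⟨hc1, hc2, hωc1, hωc2⟩ := hc
  have hω : 2 ^ ω ∣ 2 ^ (ω + 1) := pow_dvd_pow 2 (Nat.le_succ ω)
  have h1 := add_le_of_dvd_of_lt hωc1 hω hc1
  have h2 := add_le_of_dvd_of_lt hωc2 hω hc2
  have hjω : 2 ^ j ∣ 2 ^ ω := pow_dvd_pow 2 hj
  rw [pow_succ] at h1 h2
  refine ⟨by omega, by omega, hja.add (hjω.trans hωc1), hjb.add (hjω.trans hωc2)⟩

theorem dyadicCell_add_subset_dyadicCell {ω j a b : ℕ} (c : ℕ × ℕ) (hj : j ≤ ω)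
    (h : CellCorner ω j a b) : dyadicCell j (a + c.1) (b + c.2) ⊆ dyadicCell ω c.1 c.2 := by
  obtain ⟨ha, hb, hja, hjb⟩ := h
  have hjω : 2 ^ j ∣ 2 ^ ω := pow_dvd_pow 2 hj
  have h1 := add_le_of_dvd_of_lt hja hjω ha
  have h2 := add_le_of_dvd_of_lt hjb hjω hb
  intro q hq
  rw [mem_dyadicCell] at hq ⊢
  omega

theorem eq_append_drop_of_prefix {α : Type*} {u x : List α} {n : ℕ} (h : u <+: x)
    (hn : u.length = n) : x = u ++ x.drop n := by
  rw [List.prefix_iff_eq_take] at h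
  conv_lhs => rw [← List.take_append_drop n x]
  rw [← hn, ← h]

/-- `π` restricted to the quadrant with corner `c`, moved to the origin, with the quadrant's own
two-bit string (a common prefix) removed. -/
def quadrantMap (π : ℕ → ℕ × ℕ → List Bool) (c : ℕ × ℕ) : ℕ → ℕ × ℕ → List Bool :=
  fun ℓ q => (π (ℓ + 1) (q.1 + c.1, q.2 + c.2)).drop 2

def quadrantRank (π : ℕ → ℕ × ℕ → List Bool) (ω : ℕ) (p : ℕ × ℕ) : ℕ :=
  binVal (π 1 (quadrantCorner ω (quadrant ω p)))

namespace IsRSFCMap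

variable {ω : ℕ} {π : ℕ → ℕ × ℕ → List Bool} {c : ℕ × ℕ}

theorem eq_append_quadrantMap (hπ : IsRSFCMap (ω + 1) π) (hc : CellCorner (ω + 1) ω c.1 c.2)
    {ℓ a b : ℕ} (hℓ : ℓ ≤ ω) (h : CellCorner ω (ω - ℓ) a b) :
    π (ℓ + 1) (a + c.1, b + c.2) = π 1 c ++ quadrantMap π c ℓ (a, b) := by
  have hc' : CellCorner (ω + 1) (ω + 1 - 1) c.1 c.2 := hc
  have hprefix := hπ.2.2 1 (ℓ + 1) (by omega) (by omega) c.1 c.2 (a + c.1) (b + c.2) hc'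
    (by simpa using cellCorner_add hc (by omega) h)
    (by simpa using dyadicCell_add_subset_dyadicCell c (by omega) h)
  exact eq_append_drop_of_prefix hprefix (hπ.1 1 (by omega) c.1 c.2 hc')

theorem eq_append_quadrantMap_of_mem_square (hπ : IsRSFCMap (ω + 1) π)
    (hc : CellCorner (ω + 1) ω c.1 c.2) {p : ℕ × ℕ} (hp : p ∈ square c (2 ^ ω)) :
    π (ω + 1) p = π 1 c ++ quadrantMap π c ω (p.1 - c.1, p.2 - c.2) := by
  rw [mem_square] at hp
  have h := hπ.eq_append_quadrantMap hc le_rfl (a := p.1 - c.1) (b := p.2 - c.2)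
    ⟨by omega, by omega, by simp, by simp⟩
  rwa [show (p.1 - c.1 + c.1, p.2 - c.2 + c.2) = p by ext <;> simp only <;> omega] at h

theorem quadrantMap (hπ : IsRSFCMap (ω + 1) π) (hc : CellCorner (ω + 1) ω c.1 c.2) :
    IsRSFCMap ω (quadrantMap π c) := by
  refine ⟨fun ℓ hℓ a b h => ?_, fun ℓ hℓ a b a' b' h h' hne heq => ?_,
    fun ℓ ℓ' hℓℓ' hℓ' a b a' b' h h' hsub => ?_⟩
  · rw [_root_.quadrantMap, List.length_drop,
      hπ.1 (ℓ + 1) (by omega) _ _ (by simpa using cellCorner_add hc (by omega) h)]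
    omega
  · refine hπ.2.1 (ℓ + 1) (by omega) _ _ _ _ (by simpa using cellCorner_add hc (by omega) h)
      (by simpa using cellCorner_add hc (by omega) h') ?_ ?_
    · simp only [ne_eq, Prod.mk.injEq] at hne ⊢
      omega
    · rw [hπ.eq_append_quadrantMap hc hℓ h, hπ.eq_append_quadrantMap hc hℓ h', heq]
  · obtain ⟨t, ht⟩ := hπ.2.2 (ℓ + 1) (ℓ' + 1) (by omega) (by omega) _ _ _ _
      (by simpa using cellCorner_add hc (by omega) h)
      (by simpa using cellCorner_add hc (by omega) h')
      (by simpa using dyadicCell_add_subset_add hsub)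
    rw [hπ.eq_append_quadrantMap hc (by omega) h, hπ.eq_append_quadrantMap hc hℓ' h',
      List.append_assoc] at ht
    exact ⟨t, List.append_cancel_left ht⟩

theorem length_quadrantCorner (hπ : IsRSFCMap (ω + 1) π) {k : ℕ} (hk : k < 4) :
    (π 1 (quadrantCorner ω k)).length = 2 :=
  hπ.1 1 (by omega) _ _ (cellCorner_quadrantCorner hk)

theorem exists_equiv_binVal_quadrantCorner (hπ : IsRSFCMap (ω + 1) π) :
    ∃ e : Fin 4 ≃ Fin 4, ∀ k : Fin 4, binVal (π 1 (quadrantCorner ω k)) = e k := by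
  let rank : Fin 4 → Fin 4 := fun k =>
    ⟨binVal (π 1 (quadrantCorner ω k)), by
      simpa [hπ.length_quadrantCorner k.2] using binVal_lt_two_pow (π 1 (quadrantCorner ω k))⟩
  have hrank : Function.Injective rank := by
    intro k k' h
    by_contra hne
    refine hπ.2.1 1 (by omega) _ _ _ _ (cellCorner_quadrantCorner k.2)
      (cellCorner_quadrantCorner k'.2) (fun hkk' => hne (Fin.ext ?_))
      (binVal_injective_of_length_eq ((hπ.length_quadrantCorner k.2).trans
        (hπ.length_quadrantCorner k'.2).symm) (congrArg Fin.val h))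
    rw [← quadrant_quadrantCorner (ω := ω) k.2, ← quadrant_quadrantCorner (ω := ω) k'.2]
    exact congrArg (quadrant ω) hkk'
  exact ⟨Equiv.ofBijective rank (Finite.injective_iff_bijective.1 hrank), fun _ => rfl⟩

theorem quadrantRank_le_of_lex (hπ : IsRSFCMap (ω + 1) π) {p q : ℕ × ℕ} (hp : p ∈ grid (ω + 1))
    (hq : q ∈ grid (ω + 1)) (h : List.Lex (· < ·) (π (ω + 1) p) (π (ω + 1) q)) :
    quadrantRank π ω p ≤ quadrantRank π ω q := by
  by_contra hlt
  set cp := quadrantCorner ω (quadrant ω p)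
  set cq := quadrantCorner ω (quadrant ω q)
  have hlen := (hπ.length_quadrantCorner (quadrant_lt_four hq)).trans
    (hπ.length_quadrantCorner (quadrant_lt_four hp)).symm
  have hlex := ((lex_iff_binVal_lt hlen).2 (not_le.1 hlt)).append_of_length_eq hlen
    (_root_.quadrantMap π cq ω (q.1 - cq.1, q.2 - cq.2))
    (_root_.quadrantMap π cp ω (p.1 - cp.1, p.2 - cp.2))
  rw [← hπ.eq_append_quadrantMap_of_mem_square (cellCorner_quadrantCorner (quadrant_lt_four hq))
      (mem_square_quadrantCorner_quadrant hq),
    ← hπ.eq_append_quadrantMap_of_mem_square (cellCorner_quadrantCorner (quadrant_lt_four hp))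
      (mem_square_quadrantCorner_quadrant hp)] at hlex
  exact List.lt_asymm h hlex

theorem quadrantRank_lt_four (hπ : IsRSFCMap (ω + 1) π) {p : ℕ × ℕ} (hp : p ∈ grid (ω + 1)) :
    quadrantRank π ω p < 4 := by
  have h := binVal_lt_two_pow (π 1 (quadrantCorner ω (quadrant ω p)))
  rwa [hπ.length_quadrantCorner (quadrant_lt_four hp)] at h

theorem exists_equiv_quadrantRank_eq_iff (hπ : IsRSFCMap (ω + 1) π) :
    ∃ e : Fin 4 ≃ Fin 4, ∀ p ∈ grid (ω + 1), ∀ j : Fin 4,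
      quadrantRank π ω p = j ↔ p ∈ square (quadrantCorner ω (e j)) (2 ^ ω) := by
  obtain ⟨e, he⟩ := hπ.exists_equiv_binVal_quadrantCorner
  refine ⟨e.symm, fun p hp j => ?_⟩
  rw [mem_square_quadrantCorner_iff (e.symm j).2, quadrantRank, he ⟨_, quadrant_lt_four hp⟩,
    Fin.val_inj, ← Equiv.eq_symm_apply, ← Fin.val_inj]
  exact (and_iff_right hp).symm

theorem quadrantRank_eq_div (hπ : IsRSFCMap (ω + 1) π) {σ : ℕ → ℕ × ℕ}
    (hbij : Set.BijOn σ (Set.Iio (4 ^ (ω + 1))) (grid (ω + 1))) (hsorted : SortsTo (ω + 1) π σ)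
    {i : ℕ} (hi : i < 4 ^ (ω + 1)) : quadrantRank π ω (σ i) = i / 4 ^ ω := by
  obtain ⟨e, he⟩ := hπ.exists_equiv_quadrantRank_eq_iff
  have hM : 4 ^ (ω + 1) = 4 * 4 ^ ω := pow_succ' 4 ω
  rw [hM] at hbij hi
  refine eq_div_of_monotoneOn_of_card_fiber (f := fun i => quadrantRank π ω (σ i))
    (fun i hi i' hi' hii' => ?_) (fun i hi => hπ.quadrantRank_lt_four (hbij.mapsTo hi))
    (fun j hj => ?_) hi
  · rcases hii'.eq_or_lt with rfl | hlt
    · exact le_rfl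
    · exact hπ.quadrantRank_le_of_lex (hbij.mapsTo hi) (hbij.mapsTo hi')
        (hsorted i i' hlt (hM ▸ hi'))
  · have hfiber : (↑{i ∈ Finset.range (4 * 4 ^ ω) | quadrantRank π ω (σ i) = j} : Set ℕ) =
        Set.Iio (4 * 4 ^ ω) ∩ σ ⁻¹' square (quadrantCorner ω (e ⟨j, hj⟩)) (2 ^ ω) := by
      ext i
      simp only [Finset.coe_filter, Finset.mem_range, Set.mem_ofPred_eq, Set.mem_inter_iff,
        Set.mem_Iio, Set.mem_preimage]
      exact and_congr_right fun hi => he _ (hbij.mapsTo hi) ⟨j, hj⟩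
    rw [← Set.ncard_coe_finset, hfiber, hbij.ncard_inter_preimage,
      Set.inter_eq_right.2 (square_quadrantCorner_subset_grid (e _).2), ncard_square, ← mul_pow]
    norm_num

theorem exists_equiv_image_Ico_eq (hπ : IsRSFCMap (ω + 1) π) {σ : ℕ → ℕ × ℕ}
    (hbij : Set.BijOn σ (Set.Iio (4 ^ (ω + 1))) (grid (ω + 1))) (hsorted : SortsTo (ω + 1) π σ) :
    ∃ e : Fin 4 ≃ Fin 4, ∀ j : Fin 4, σ '' Set.Ico (j.1 * 4 ^ ω) ((j.1 + 1) * 4 ^ ω) =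
      square (quadrantCorner ω (e j)) (2 ^ ω) ∩ grid (ω + 1) := by
  obtain ⟨e, he⟩ := hπ.exists_equiv_quadrantRank_eq_iff
  refine ⟨e, fun j => ?_⟩
  have hblock : Set.Ico (j.1 * 4 ^ ω) ((j.1 + 1) * 4 ^ ω) =
      Set.Iio (4 ^ (ω + 1)) ∩ σ ⁻¹' square (quadrantCorner ω (e j)) (2 ^ ω) := by
    ext i
    simp only [Set.mem_inter_iff, Set.mem_Iio, Set.mem_preimage]
    constructor
    · intro hij
      have hi := Ico_subset_Iio_pow_succ j.2 hij
      refine ⟨hi, (he _ (hbij.mapsTo hi) j).1 ?_⟩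
      rw [hπ.quadrantRank_eq_div hbij hsorted hi, Nat.div_eq_of_lt_le hij.1 hij.2]
    · rintro ⟨hi, hmem⟩
      have hij := (Nat.div_eq_iff (by positivity)).1
        ((hπ.quadrantRank_eq_div hbij hsorted hi).symm.trans ((he _ (hbij.mapsTo hi) j).2 hmem))
      rw [Set.mem_Ico, add_one_mul]
      omega
  rw [hblock, Set.image_inter_preimage, hbij.image_eq, Set.inter_comm]

end IsRSFCMap

theorem bijOn_sub_of_image_Ico_eq {σ : ℕ → ℕ × ℕ} {j N s : ℕ} {c : ℕ × ℕ}
    (hinj : Set.InjOn σ (Set.Ico (j * N) ((j + 1) * N)))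
    (himage : σ '' Set.Ico (j * N) ((j + 1) * N) = square c s) :
    Set.BijOn (fun i => ((σ (j * N + i)).1 - c.1, (σ (j * N + i)).2 - c.2)) (Set.Iio N)
      (square (0, 0) s) := by
  have hmem : ∀ i < N, σ (j * N + i) ∈ square c s := fun i hi =>
    himage ▸ Set.mem_image_of_mem σ (add_mem_Ico_iff.2 hi)
  refine ⟨fun i hi => ?_, fun i hi i' hi' h => ?_, fun q hq => ?_⟩
  · have h := hmem i hi
    rw [mem_square] at h ⊢
    dsimp only
    omega
  · have h₁ := hmem i hi
    have h₂ := hmem i' hi'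
    rw [mem_square] at h₁ h₂
    simp only [Prod.mk.injEq] at h
    have := hinj (add_mem_Ico_iff.2 hi) (add_mem_Ico_iff.2 hi') (Prod.ext (by omega) (by omega))
    omega
  · rw [mem_square] at hq
    have hq' : (q.1 + c.1, q.2 + c.2) ∈ σ '' Set.Ico (j * N) ((j + 1) * N) := by
      rw [himage, mem_square]
      dsimp only at hq ⊢
      omega
    obtain ⟨i, hi, hσ⟩ := hq'
    rw [Set.mem_Ico, add_one_mul] at hi
    refine ⟨i - j * N, Set.mem_Iio.2 (by omega), ?_⟩
    simp only [Nat.add_sub_cancel' hi.1, hσ, Nat.add_sub_cancel]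

theorem SortsTo.quadrantMap {ω : ℕ} {π : ℕ → ℕ × ℕ → List Bool} {σ : ℕ → ℕ × ℕ}
    (hsorted : SortsTo (ω + 1) π σ) (hπ : IsRSFCMap (ω + 1) π) {c : ℕ × ℕ}
    (hc : CellCorner (ω + 1) ω c.1 c.2) {j : ℕ} (hj : j < 4)
    (himage : σ '' Set.Ico (j * 4 ^ ω) ((j + 1) * 4 ^ ω) = square c (2 ^ ω)) :
    SortsTo ω (quadrantMap π c)
      (fun i => ((σ (j * 4 ^ ω + i)).1 - c.1, (σ (j * 4 ^ ω + i)).2 - c.2)) := by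
  have hmem : ∀ i < 4 ^ ω, σ (j * 4 ^ ω + i) ∈ square c (2 ^ ω) := fun i hi =>
    himage ▸ Set.mem_image_of_mem σ (add_mem_Ico_iff.2 hi)
  intro i i' hii' hi'
  have h := hsorted _ _ (Nat.add_lt_add_left hii' _)
    (Ico_subset_Iio_pow_succ hj (add_mem_Ico_iff.2 hi'))
  rwa [hπ.eq_append_quadrantMap_of_mem_square hc (hmem i (hii'.trans hi')),
    hπ.eq_append_quadrantMap_of_mem_square hc (hmem i' hi'), List.lex_append_left_iff] at h

/-- For every recursive space-filling curve map `π` on the grid `D = {0,…,2^ω−1}²`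
(Definition 2.3), the bijection `σ : {0,…,4^ω−1} → D` obtained by listing the points
of `D` in increasing lexicographic order of their strings `π(p)` is a recursive
space-filling curve ordering in the sense of Definition 2.1. -/
theorem rsfc_map_to_ordering (ω : ℕ) (π : ℕ → ℕ × ℕ → List Bool)
    (hπ : IsRSFCMap ω π) (σ : ℕ → ℕ × ℕ)
    (hbij : Set.BijOn σ (Set.Iio (4 ^ ω)) (grid ω))
    (hsorted : SortsTo ω π σ) :
    IsRSFCOrdering ω σ := by
  induction ω generalizing π σ with
  | zero => exact hbij
  | succ ω ih =>
    obtain ⟨e, himage⟩ := hπ.exists_equiv_image_Ico_eq hbij hsorted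
    refine ⟨hbij, fun j => quadrantCorner ω (e j), 2 ^ ω,
      fun j j' hjj' => disjoint_square_quadrantCorner (e j).2 (e j').2
        (Fin.val_ne_of_ne (e.injective.ne hjj')),
      (e.surjective.iUnion_comp fun k => square (quadrantCorner ω k) (2 ^ ω)).trans
        (iUnion_square_quadrantCorner ω),
      himage, fun j => ?_⟩
    have hc := cellCorner_quadrantCorner (ω := ω) (e j).2
    have hsquare := (himage j).trans
      (Set.inter_eq_left.2 (square_quadrantCorner_subset_grid (e j).2))
    exact ih _ (hπ.quadrantMap hc) _
      (bijOn_sub_of_image_Ico_eq (hbij.injOn.mono (Ico_subset_Iio_pow_succ j.2)) hsquare)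
      (hsorted.quadrantMap hπ hc j.2 hsquare)
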